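/- arXiv:2404.09084 — 2 statements merged into one kernel-verified Lean document; each statement's English description precedes it below -/
import Mathlib

section
/- Let n ≥ 1 and let W = (W₁,…,Wₙ) be the weighted left multi-shift on F²(Hₙ) associated with a weight sequence μ = {μ_β}_{|β|≥1} of strictly positive real numbers with sup_{α∈𝔽ₙ⁺} μ_{g_iα} < ∞ for each i. If μ_β → 0 as |β| → ∞ (that is, for every ε > 0 there is N such that μ_β < ε whenever |β| ≥ N), then the joint spectral radius satisfies r(W) = 0. -/
open Filter ContinuousLinearMap
open scoped ComplexConjugate

noncomputable section

attribute [local instance] Classical.decEq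

abbrev Word (n : ℕ) := FreeMonoid (Fin n)

abbrev Fock (n : ℕ) := lp (fun _ : Word n => ℂ) 2

def fockE {n : ℕ} (α : Word n) : Fock n := lp.single 2 α 1

def wordOp {n : ℕ} {H : Type*} [NormedAddCommGroup H] [InnerProductSpace ℂ H]
    (T : Fin n → H →L[ℂ] H) (α : Word n) : H →L[ℂ] H :=
  ((FreeMonoid.toList α).map T).prod

def wordOfFn {n k : ℕ} (f : Fin k → Fin n) : Word n := FreeMonoid.ofList (List.ofFn f)

def rowSum {n : ℕ} {H : Type*} [NormedAddCommGroup H] [InnerProductSpace ℂ H]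
    [CompleteSpace H] (T : Fin n → H →L[ℂ] H) (k : ℕ) : H →L[ℂ] H :=
  ∑ f : Fin k → Fin n, wordOp T (wordOfFn f) * adjoint (wordOp T (wordOfFn f))

def jsr {n : ℕ} {H : Type*} [NormedAddCommGroup H] [InnerProductSpace ℂ H]
    [CompleteSpace H] (T : Fin n → H →L[ℂ] H) : ℝ :=
  limUnder atTop fun k : ℕ => ‖rowSum T k‖ ^ ((1 : ℝ) / (2 * k))

def muProd {n : ℕ} (μ : Word n → ℝ) (β α : Word n) : ℝ :=
  ((List.range (FreeMonoid.length β)).map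
    fun j => μ (FreeMonoid.ofList ((FreeMonoid.toList β).drop j) * α)).prod

def IsWeightedShift {n : ℕ} (μ : Word n → ℝ) (W : Fin n → Fock n →L[ℂ] Fock n) : Prop :=
  ∀ (i : Fin n) (α : Word n),
    W i (fockE α) = (μ (FreeMonoid.of i * α) : ℂ) • fockE (FreeMonoid.of i * α)

def BddWeights {n : ℕ} (μ : Word n → ℝ) : Prop :=
  ∀ i : Fin n, BddAbove (Set.range fun α : Word n => μ (FreeMonoid.of i * α))

def IsWeightedShiftTensor {n : ℕ} {H : Type*} [NormedAddCommGroup H] [InnerProductSpace ℂ H]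
    (μ : Word n → ℝ)
    (Wt : Fin n → lp (fun _ : Word n => H) 2 →L[ℂ] lp (fun _ : Word n => H) 2) : Prop :=
  ∀ (i : Fin n) (α : Word n) (h : H),
    Wt i (lp.single 2 α h) = (μ (FreeMonoid.of i * α) : ℂ) • lp.single 2 (FreeMonoid.of i * α) h

def polyOp {n : ℕ} {H : Type*} [NormedAddCommGroup H] [InnerProductSpace ℂ H]
    (T : Fin n → H →L[ℂ] H) (c : Word n →₀ ℂ) : H →L[ℂ] H :=
  c.sum fun α z => z • wordOp T α

/-! Write `W_β e_γ = μ_{β,γ} e_{βγ}`. The vectors `e_{βγ}` are orthonormal, so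
`‖W_β‖ ≤ sup_γ |μ_{β,γ}|`. The weights are bounded by `M = ∑ ‖W_i‖`, and of the `|β|` factors of
`μ_{β,γ}` only the at most `N` weights of words shorter than `N` can exceed `ε`; hence
`‖W_β‖ ≤ (M/ε)^N ε^|β|`, so `‖∑_{|β|=k} W_β W_β^*‖ ≤ (M/ε)^{2N} (n ε²)^k` and the `2k`-th roots
have `limsup ≤ √n ε` for every `ε > 0`. -/

section OrthonormalImage

variable {ι 𝕜 E : Type*} [RCLike 𝕜] [NormedAddCommGroup E] [InnerProductSpace 𝕜 E]
  [CompleteSpace E] [DecidableEq ι]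

theorem lp.orthonormal_single : Orthonormal 𝕜 fun i : ι => lp.single 2 i (1 : 𝕜) := by
  rw [orthonormal_iff_ite]
  intro i j
  rw [lp.inner_single_left, lp.single_apply, Pi.single_apply]
  split_ifs <;> simp

theorem opNorm_le_of_single_eq_smul (S : lp (fun _ : ι => 𝕜) 2 →L[𝕜] E) {u : ι → E}
    (hu : Orthonormal 𝕜 u) {c : ι → 𝕜} {C : ℝ} (hC : 0 ≤ C) (hc : ∀ i, ‖c i‖ ≤ C)
    (hS : ∀ i, S (lp.single 2 i 1) = c i • u i) : ‖S‖ ≤ C := by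
  refine S.opNorm_le_bound hC fun x => ?_
  have hcx : Memℓp (fun i => c i * x i) 2 :=
    ((lp.memℓp x).norm.const_mul C).mono fun i => by
      rw [norm_mul]; exact mul_le_mul_of_nonneg_right (hc i) (norm_nonneg _)
  set y : lp (fun _ : ι => 𝕜) 2 := ⟨_, hcx⟩
  have hy (i : ι) : y i = c i * x i := rfl
  have hSx : S x = hu.orthogonalFamily.linearIsometry y := by
    refine ((lp.hasSum_single ENNReal.ofNat_ne_top x).mapL S).unique ?_
    convert hu.orthogonalFamily.hasSum_linearIsometry y using 2 with i
    rw [LinearIsometry.toSpanSingleton_apply, ← mul_one (x i), ← smul_eq_mul, lp.single_smul,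
      map_smul, hS, smul_smul, mul_comm, hy]
  calc ‖S x‖ = ‖y‖ := by rw [hSx, LinearIsometry.norm_map]
    _ ≤ ‖(C : 𝕜) • x‖ := lp.norm_mono two_ne_zero fun i => by
        simp only [hy, lp.coeFn_smul, Pi.smul_apply, smul_eq_mul, norm_mul, RCLike.norm_ofReal,
          abs_of_nonneg hC]
        exact mul_le_mul_of_nonneg_right (hc i) (norm_nonneg _)
    _ = C * ‖x‖ := by rw [lp.norm_const_smul two_ne_zero, RCLike.norm_ofReal, abs_of_nonneg hC]

end OrthonormalImage

section WordOp

variable {n : ℕ} {H : Type*} [NormedAddCommGroup H] [InnerProductSpace ℂ H]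

@[simp] theorem wordOp_one (T : Fin n → H →L[ℂ] H) : wordOp T 1 = 1 := rfl

theorem wordOp_of_mul (T : Fin n → H →L[ℂ] H) (i : Fin n) (β : Word n) :
    wordOp T (FreeMonoid.of i * β) = T i * wordOp T β := rfl

@[simp] theorem length_wordOfFn {k : ℕ} (f : Fin k → Fin n) :
    FreeMonoid.length (wordOfFn f) = k :=
  List.length_ofFn

theorem norm_rowSum_le [CompleteSpace H] (T : Fin n → H →L[ℂ] H) (k : ℕ) {C : ℝ}
    (hC : ∀ f : Fin k → Fin n, ‖wordOp T (wordOfFn f)‖ ≤ C) :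
    ‖rowSum T k‖ ≤ n ^ k * C ^ 2 := by
  calc ‖rowSum T k‖
      ≤ ∑ f : Fin k → Fin n, ‖wordOp T (wordOfFn f) * adjoint (wordOp T (wordOfFn f))‖ :=
        norm_sum_le _ _
    _ ≤ ∑ _f : Fin k → Fin n, C ^ 2 := by
        gcongr with f
        rw [← star_eq_adjoint, CStarRing.norm_self_mul_star, ← sq]
        exact pow_le_pow_left₀ (norm_nonneg _) (hC f) 2
    _ = n ^ k * C ^ 2 := by simp

end WordOp

section WeightedShift

variable {n : ℕ} {μ : Word n → ℝ}

@[simp] theorem muProd_one (γ : Word n) : muProd μ 1 γ = 1 := rfl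

theorem muProd_of_mul (i : Fin n) (β γ : Word n) :
    muProd μ (FreeMonoid.of i * β) γ = μ (FreeMonoid.of i * β * γ) * muProd μ β γ := by
  simp only [muProd, FreeMonoid.length_mul, FreeMonoid.length_of, FreeMonoid.toList_mul,
    FreeMonoid.toList_of]
  rw [add_comm 1 β.length, List.range_succ_eq_map]
  simp only [List.map_cons, List.prod_cons, List.map_map]
  congr 1

theorem muProd_nonneg (h0 : ∀ i α, 0 ≤ μ (FreeMonoid.of i * α)) (β γ : Word n) :
    0 ≤ muProd μ β γ := by
  induction β using FreeMonoid.inductionOn' with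
  | one => simp
  | of_mul i β ih => rw [muProd_of_mul, mul_assoc]; exact mul_nonneg (h0 _ _) ih

theorem muProd_le_pow_mul_pow {ε L : ℝ} {N : ℕ} (hε : 0 ≤ ε) (hL : 1 ≤ L)
    (h0 : ∀ i α, 0 ≤ μ (FreeMonoid.of i * α)) (hM : ∀ i α, μ (FreeMonoid.of i * α) ≤ ε * L)
    (hN : ∀ β, N ≤ FreeMonoid.length β → μ β ≤ ε) (β γ : Word n) :
    muProd μ β γ ≤ ε ^ FreeMonoid.length β * L ^ min (FreeMonoid.length β) N := by
  induction β using FreeMonoid.inductionOn' with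
  | one => simp
  | of_mul i β ih =>
    have hlen : FreeMonoid.length (FreeMonoid.of i * β) = FreeMonoid.length β + 1 := by
      rw [FreeMonoid.length_mul, FreeMonoid.length_of, add_comm]
    have hpos : 0 ≤ μ (FreeMonoid.of i * β * γ) := by rw [mul_assoc]; exact h0 _ _
    rw [muProd_of_mul, hlen]
    refine (mul_le_mul_of_nonneg_left ih hpos).trans ?_
    by_cases hlong : N ≤ FreeMonoid.length β + 1
    · have hμε : μ (FreeMonoid.of i * β * γ) ≤ ε :=
        hN _ (by simp only [FreeMonoid.length_mul, FreeMonoid.length_of]; omega)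
      grw [hμε, pow_le_pow_right₀ hL (min_le_min_right N (Nat.le_succ _))]
      exact le_of_eq (by ring)
    · have hμM : μ (FreeMonoid.of i * β * γ) ≤ ε * L := by rw [mul_assoc]; exact hM _ _
      rw [min_eq_left (by omega), min_eq_left (by omega)]
      grw [hμM]
      exact le_of_eq (by ring)

theorem norm_fockE (α : Word n) : ‖fockE α‖ = 1 := by
  rw [fockE, lp.norm_single (by norm_num), norm_one]

theorem orthonormal_fockE_mul (β : Word n) : Orthonormal ℂ fun γ => fockE (β * γ) :=
  lp.orthonormal_single.comp _ (mul_right_injective β)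

variable {W : Fin n → Fock n →L[ℂ] Fock n}

theorem IsWeightedShift.abs_weight_le_norm (hW : IsWeightedShift μ W) (i : Fin n) (α : Word n) :
    |μ (FreeMonoid.of i * α)| ≤ ‖W i‖ := by
  have h := (W i).le_opNorm (fockE α)
  rwa [hW, norm_smul, norm_fockE, norm_fockE, mul_one, mul_one, Complex.norm_real,
    Real.norm_eq_abs] at h

theorem IsWeightedShift.wordOp_fockE (hW : IsWeightedShift μ W) (β γ : Word n) :
    wordOp W β (fockE γ) = (muProd μ β γ : ℂ) • fockE (β * γ) := by
  induction β using FreeMonoid.inductionOn' with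
  | one => simp
  | of_mul i β ih =>
    rw [wordOp_of_mul, mul_apply_eq_comp, ih, map_smul, hW,
      muProd_of_mul, mul_assoc, smul_smul, Complex.ofReal_mul, mul_comm]

theorem IsWeightedShift.norm_wordOp_le (hW : IsWeightedShift μ W) (β : Word n) {C : ℝ}
    (hC : 0 ≤ C) (hμC : ∀ γ, |muProd μ β γ| ≤ C) : ‖wordOp W β‖ ≤ C :=
  opNorm_le_of_single_eq_smul _ (orthonormal_fockE_mul β) hC
    (fun γ => by simpa using hμC γ) (hW.wordOp_fockE β)

theorem IsWeightedShift.exists_norm_wordOp_le (hW : IsWeightedShift μ W)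
    (h0 : ∀ i α, 0 ≤ μ (FreeMonoid.of i * α))
    (hlim : ∀ ε : ℝ, 0 < ε → ∃ N : ℕ, ∀ β : Word n, N ≤ FreeMonoid.length β → μ β < ε)
    {ε : ℝ} (hε : 0 < ε) : ∃ D, ∀ β, ‖wordOp W β‖ ≤ D * ε ^ FreeMonoid.length β := by
  obtain ⟨N, hN⟩ := hlim ε hε
  set L := max 1 ((∑ i, ‖W i‖) / ε)
  have hM (i : Fin n) (α : Word n) : μ (FreeMonoid.of i * α) ≤ ε * L :=
    calc μ (FreeMonoid.of i * α) ≤ ‖W i‖ := (le_abs_self _).trans (hW.abs_weight_le_norm i α)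
      _ ≤ ∑ j, ‖W j‖ := Finset.single_le_sum (fun j _ => norm_nonneg (W j)) (Finset.mem_univ i)
      _ ≤ ε * L := by rw [← div_le_iff₀' hε]; exact le_max_right _ _
  refine ⟨L ^ N, fun β => hW.norm_wordOp_le β (by positivity) fun γ => ?_⟩
  rw [abs_of_nonneg (muProd_nonneg h0 β γ), mul_comm]
  grw [muProd_le_pow_mul_pow hε.le (le_max_left _ _) h0 hM (fun β hβ => (hN β hβ).le) β γ,
    min_le_right]
  exact le_max_left _ _

end WeightedShift

theorem tendsto_rpow_inv_of_le_mul_pow {x : ℕ → ℝ} (hx : ∀ k, 0 ≤ x k)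
    (h : ∀ r > 0, ∃ D, ∀ k, x k ≤ D * r ^ k) :
    Tendsto (fun k => x k ^ (k : ℝ)⁻¹) atTop (nhds 0) := by
  refine tendsto_order.2 ⟨fun a ha => .of_forall fun k => ha.trans_le (Real.rpow_nonneg (hx k) _),
    fun ρ hρ => ?_⟩
  obtain ⟨D, hD⟩ := h (ρ / 2) (half_pos hρ)
  set D' := max D 1
  have hroot : Tendsto (fun k : ℕ => D' ^ (k : ℝ)⁻¹ * (ρ / 2)) atTop (nhds (ρ / 2)) := by
    have hD' : D' ≠ 0 := (zero_lt_one.trans_le (le_max_right D 1)).ne'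
    simpa using (tendsto_const_nhds.rpow (tendsto_inv_atTop_zero.comp
      tendsto_natCast_atTop_atTop) (Or.inl hD')).mul_const (ρ / 2)
  filter_upwards [hroot.eventually_lt_const (half_lt_self hρ), eventually_ne_atTop 0] with k hk hk0
  calc x k ^ (k : ℝ)⁻¹ ≤ (D' * (ρ / 2) ^ k) ^ (k : ℝ)⁻¹ := by
        refine Real.rpow_le_rpow (hx k) ((hD k).trans ?_) (by positivity)
        gcongr
        exact le_max_left _ _
    _ = D' ^ (k : ℝ)⁻¹ * (ρ / 2) := by
        rw [Real.mul_rpow (by positivity) (by positivity), Real.pow_rpow_inv_natCast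
          (by positivity) hk0]
    _ < ρ := hk

theorem stmt_3_general (n : ℕ) (μ : Word n → ℝ)
    (hμ : ∀ β : Word n, 1 ≤ FreeMonoid.length β → 0 < μ β)
    (W : Fin n → Fock n →L[ℂ] Fock n) (hW : IsWeightedShift μ W)
    (hlim : ∀ ε : ℝ, 0 < ε → ∃ N : ℕ, ∀ β : Word n, N ≤ FreeMonoid.length β → μ β < ε) :
    Tendsto (fun k : ℕ => ‖rowSum W k‖ ^ ((1 : ℝ) / (2 * k))) atTop (nhds 0) := by
  have h0 (i : Fin n) (α : Word n) : 0 ≤ μ (FreeMonoid.of i * α) :=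
    (hμ _ (by simp [FreeMonoid.length_mul])).le
  have hdecay : ∀ r > 0, ∃ D, ∀ k, ‖rowSum W k‖ ≤ D * r ^ k := by
    intro r hr
    set ε := √(r / (n + 1))
    have hε : (n : ℝ) * ε ^ 2 ≤ r := by
      rw [Real.sq_sqrt (by positivity), mul_div_assoc', div_le_iff₀ (by positivity)]
      linarith
    obtain ⟨D, hD⟩ := hW.exists_norm_wordOp_le h0 hlim (ε := ε) (by positivity)
    refine ⟨D ^ 2, fun k => ?_⟩
    calc ‖rowSum W k‖ ≤ n ^ k * (D * ε ^ k) ^ 2 :=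
          norm_rowSum_le W k fun f => by simpa using hD (wordOfFn f)
      _ = D ^ 2 * (n * ε ^ 2) ^ k := by ring
      _ ≤ D ^ 2 * r ^ k := by gcongr
  have hsqrt := (tendsto_rpow_inv_of_le_mul_pow (fun k => norm_nonneg _) hdecay).rpow_const
    (p := 2⁻¹) (Or.inr (by norm_num))
  rw [Real.zero_rpow (by norm_num)] at hsqrt
  refine hsqrt.congr fun k => ?_
  rw [← Real.rpow_mul (norm_nonneg _)]
  ring_nf

theorem stmt_3 (n : ℕ) (hn : 1 ≤ n) (μ : Word n → ℝ)
    (hμ : ∀ β : Word n, 1 ≤ FreeMonoid.length β → 0 < μ β)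
    (hbdd : BddWeights μ)
    (W : Fin n → Fock n →L[ℂ] Fock n) (hW : IsWeightedShift μ W)
    (hlim : ∀ ε : ℝ, 0 < ε → ∃ N : ℕ, ∀ β : Word n, N ≤ FreeMonoid.length β → μ β < ε) :
    Tendsto (fun k : ℕ => ‖rowSum W k‖ ^ ((1 : ℝ) / (2 * k))) atTop (nhds 0) :=
  stmt_3_general n μ hμ W hW hlim

end
end

section
/- Let n ≥ 1 and let W = (W₁,…,Wₙ) be the weighted left multi-shift on F²(Hₙ) associated with a weight sequence μ = {μ_β}_{|β|≥1} of nonnegative reals with sup_{α∈𝔽ₙ⁺} μ_{g_iα} < ∞ for each i. Then the C*-algebra C*(W) generated by W₁,…,Wₙ and the identity is irreducible — equivalently, every bounded operator A on F²(Hₙ) satisfying A W_i = W_i A and A W_i^* = W_i^* A for all i ∈ {1,…,n} is a scalar multiple of the identity — if and only if μ_β > 0 for every β ∈ 𝔽ₙ⁺ with |β| ≥ 1. -/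
open Filter ContinuousLinearMap
open scoped ComplexConjugate

noncomputable section

attribute [local instance] Classical.decEq

/-! If no weight vanishes, an operator `A` commuting with every `W i` and `W i†` maps the vacuum
`e_∅` into the joint kernel of the `W i†`, which is `ℂ e_∅`; so `A e_∅ = c e_∅`, and commuting with
the `W i` carries this along every word, the weights being nonzero. Conversely, if `μ β = 0` for a
nonempty `β`, the set of words ending in `β` is closed under `γ ↦ g_i γ` and its inverse along
every nonzero weight, so the coordinate projection onto it commutes with every `W i†` and, being
self-adjoint, with every `W i`; it kills `e_∅` and fixes `e_β`, so it is not a scalar. -/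

open scoped ENNReal InnerProductSpace

namespace lp

variable {𝕜 α E : Type*} {p : ℝ≥0∞} [Fact (1 ≤ p)]

section Normed

variable [NormedField 𝕜] [NormedAddCommGroup E] [NormedSpace 𝕜 E]

variable (𝕜 E p) in
def indicatorCLM (s : Set α) : lp (fun _ : α => E) p →L[𝕜] lp (fun _ : α => E) p :=
  LinearMap.mkContinuous
    { toFun x := ⟨s.indicator x, (lp.memℓp x).mono' fun i => norm_indicator_le_norm_self _ _⟩
      map_add' x y := lp.ext (s.indicator_add x y)
      map_smul' c x := lp.ext (s.indicator_const_smul c x) }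
    1 fun x => by
      rw [one_mul]
      exact lp.norm_mono (zero_lt_one.trans_le Fact.out).ne' fun i => norm_indicator_le_norm_self _ _

lemma indicatorCLM_apply (s : Set α) (x : lp (fun _ : α => E) p) (i : α) :
    indicatorCLM 𝕜 E p s x i = s.indicator x i := rfl

lemma indicatorCLM_single_of_mem [DecidableEq α] {s : Set α} {i : α} (hi : i ∈ s) (e : E) :
    indicatorCLM 𝕜 E p s (lp.single p i e) = lp.single p i e := by
  refine lp.ext (funext fun j => ?_)
  rw [indicatorCLM_apply]
  by_cases hj : j ∈ s
  · exact Set.indicator_of_mem hj _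
  · rw [Set.indicator_of_notMem hj]
    exact (lp.single_apply_ne (E := fun _ : α => E) p i e (ne_of_mem_of_not_mem hi hj).symm).symm

lemma indicatorCLM_single_of_notMem [DecidableEq α] {s : Set α} {i : α} (hi : i ∉ s) (e : E) :
    indicatorCLM 𝕜 E p s (lp.single p i e) = 0 := by
  refine lp.ext (funext fun j => ?_)
  rw [indicatorCLM_apply, lp.coeFn_zero, Pi.zero_apply]
  by_cases hj : j ∈ s
  · rw [Set.indicator_of_mem hj]
    exact lp.single_apply_ne (E := fun _ : α => E) p i e (ne_of_mem_of_not_mem hj hi)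
  · exact Set.indicator_of_notMem hj _

end Normed

variable [RCLike 𝕜] [NormedAddCommGroup E] [InnerProductSpace 𝕜 E] [CompleteSpace E]

lemma isSelfAdjoint_indicatorCLM (s : Set α) : IsSelfAdjoint (indicatorCLM 𝕜 E 2 s) := by
  refine (ContinuousLinearMap.isSelfAdjoint_iff_isSymmetric).2 fun x y => ?_
  simp only [ContinuousLinearMap.coe_coe, lp.inner_eq_tsum, indicatorCLM_apply]
  congr 1 with i
  by_cases hi : i ∈ s <;> simp [hi]

end lp

section Commutant

variable {𝕜 ι H : Type*} [RCLike 𝕜] [NormedAddCommGroup H] [InnerProductSpace 𝕜 H]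
  [CompleteSpace H]

variable (𝕜) in
def HasTrivialCommutant (T : ι → H →L[𝕜] H) : Prop :=
  ∀ A : H →L[𝕜] H,
    (∀ i, A.comp (T i) = (T i).comp A ∧ A.comp (adjoint (T i)) = (adjoint (T i)).comp A) →
      ∃ c : 𝕜, A = c • (1 : H →L[𝕜] H)

lemma IsSelfAdjoint.comp_eq_of_comp_adjoint_eq {P T : H →L[𝕜] H} (hP : IsSelfAdjoint P)
    (h : P.comp (adjoint T) = (adjoint T).comp P) : P.comp T = T.comp P := by
  simpa [adjoint_comp, hP.adjoint_eq] using (congrArg adjoint h).symm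

end Commutant

namespace FreeMonoid

variable {α : Type*}

lemma one_notMem_range_mul_right {β : FreeMonoid α} (hβ : β ≠ 1) : 1 ∉ Set.range (· * β) :=
  fun ⟨_, hδ⟩ => hβ (congrArg ofList (List.append_eq_nil_iff.1 (congrArg toList hδ)).2)

lemma of_mul_mem_range_mul_right_iff {i : α} {γ β : FreeMonoid α} (h : of i * γ ≠ β) :
    of i * γ ∈ Set.range (· * β) ↔ γ ∈ Set.range (· * β) := by
  constructor
  · rintro ⟨δ, hδ⟩
    cases δ with
    | one => exact absurd ((one_mul β).symm.trans hδ) (Ne.symm h)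
    | of_mul j δ =>
      refine ⟨δ, ?_⟩
      have := congrArg toList hδ
      simp only [mul_assoc, toList_of_mul, List.cons.injEq] at this
      exact congrArg ofList this.2
  · rintro ⟨δ, rfl⟩
    exact ⟨of i * δ, mul_assoc _ _ _⟩

end FreeMonoid

open FreeMonoid (of)

section Fock

variable {n : ℕ}

lemma fockE_apply (α γ : Word n) : fockE α γ = if γ = α then 1 else 0 := by
  rw [fockE, lp.single_apply]
  split_ifs <;> simp_all

lemma fockE_ne_zero (α : Word n) : fockE α ≠ 0 := fun h => by
  simpa [fockE_apply] using congrArg (fun x : Fock n => x α) h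

lemma inner_fockE_left (α : Word n) (x : Fock n) : ⟪fockE α, x⟫_ℂ = x α := by
  simp [fockE, lp.inner_single_left]

lemma ext_fockE {F : Type*} [AddCommMonoid F] [Module ℂ F] [TopologicalSpace F] [T2Space F]
    {T S : Fock n →L[ℂ] F} (h : ∀ α, T (fockE α) = S (fockE α)) : T = S := by
  refine lp.ext_continuousLinearMap ENNReal.ofNat_ne_top fun α => ?_
  ext
  exact h α

end Fock

namespace IsWeightedShift

variable {n : ℕ} {μ : Word n → ℝ} {W : Fin n → Fock n →L[ℂ] Fock n}

lemma adjoint_apply (hW : IsWeightedShift μ W) (i : Fin n) (x : Fock n) (γ : Word n) :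
    adjoint (W i) x γ = μ (of i * γ) * x (of i * γ) := by
  rw [← inner_fockE_left, adjoint_inner_right, hW, inner_smul_left, Complex.conj_ofReal,
    inner_fockE_left]

lemma adjoint_fockE_one (hW : IsWeightedShift μ W) (i : Fin n) : adjoint (W i) (fockE 1) = 0 :=
  lp.ext <| funext fun γ => by simp [hW.adjoint_apply, fockE_apply]

lemma eq_smul_fockE_one_of_adjoint_eq_zero (hW : IsWeightedShift μ W)
    (hμ : ∀ i α, μ (of i * α) ≠ 0) {x : Fock n} (hx : ∀ i, adjoint (W i) x = 0) :
    x = x 1 • fockE 1 := by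
  refine lp.ext <| funext fun γ => ?_
  cases γ using FreeMonoid.casesOn with
  | one => simp [fockE_apply]
  | of_mul i γ =>
    have h := congrArg (· γ) (hx i)
    simp only [hW.adjoint_apply, lp.coeFn_zero, Pi.zero_apply, mul_eq_zero,
      Complex.ofReal_eq_zero, hμ, false_or] at h
    simp [h, fockE_apply]

lemma apply_fockE_eq_smul_of_comp_eq (hW : IsWeightedShift μ W) (hμ : ∀ i α, μ (of i * α) ≠ 0)
    {A : Fock n →L[ℂ] Fock n} (hA : ∀ i, A.comp (W i) = (W i).comp A) {c : ℂ}
    (h1 : A (fockE 1) = c • fockE 1) (α : Word n) : A (fockE α) = c • fockE α := by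
  induction α using FreeMonoid.inductionOn' with
  | one => exact h1
  | of_mul i α ih =>
    have h := congrArg (· (fockE α)) (hA i)
    simp only [comp_apply, hW i α, map_smul, ih, smul_comm c] at h
    exact smul_right_injective _ (Complex.ofReal_ne_zero.2 (hμ i α)) h

lemma hasTrivialCommutant (hW : IsWeightedShift μ W) (hμ : ∀ i α, μ (of i * α) ≠ 0) :
    HasTrivialCommutant ℂ W := by
  intro A hA
  set c := A (fockE 1) 1
  have h1 : A (fockE 1) = c • fockE 1 :=
    hW.eq_smul_fockE_one_of_adjoint_eq_zero hμ fun i => by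
      rw [← comp_apply, ← (hA i).2, comp_apply, hW.adjoint_fockE_one, map_zero]
  refine ⟨c, ext_fockE fun α => ?_⟩
  simpa using hW.apply_fockE_eq_smul_of_comp_eq hμ (fun i => (hA i).1) h1 α

lemma indicatorCLM_comp_adjoint (hW : IsWeightedShift μ W) {s : Set (Word n)}
    (hs : ∀ i γ, μ (of i * γ) ≠ 0 → (of i * γ ∈ s ↔ γ ∈ s)) (i : Fin n) :
    (lp.indicatorCLM ℂ ℂ 2 s).comp (adjoint (W i)) =
      (adjoint (W i)).comp (lp.indicatorCLM ℂ ℂ 2 s) := by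
  classical
  ext x γ
  rw [comp_apply, comp_apply, hW.adjoint_apply, lp.indicatorCLM_apply, lp.indicatorCLM_apply,
    Set.indicator_apply, Set.indicator_apply, hW.adjoint_apply]
  by_cases hμ : μ (of i * γ) = 0
  · simp [hμ]
  · by_cases hγ : γ ∈ s
    · simp [hγ, (hs i γ hμ).2 hγ]
    · simp [hγ, mt (hs i γ hμ).1 hγ]

lemma not_hasTrivialCommutant_of_eq_zero (hW : IsWeightedShift μ W) {β : Word n} (hβ : β ≠ 1)
    (hμβ : μ β = 0) : ¬ HasTrivialCommutant ℂ W := by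
  intro h
  set P := lp.indicatorCLM ℂ ℂ 2 (Set.range (· * β))
  have hs : ∀ i γ, μ (of i * γ) ≠ 0 → (of i * γ ∈ Set.range (· * β) ↔ γ ∈ Set.range (· * β)) :=
    fun i γ hμ => FreeMonoid.of_mul_mem_range_mul_right_iff (ne_of_apply_ne μ (hμβ ▸ hμ))
  have hadj := hW.indicatorCLM_comp_adjoint hs
  obtain ⟨c, hc⟩ := h P fun i =>
    ⟨(lp.isSelfAdjoint_indicatorCLM _).comp_eq_of_comp_adjoint_eq (hadj i), hadj i⟩
  have h1 : P (fockE 1) = 0 :=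
    lp.indicatorCLM_single_of_notMem (FreeMonoid.one_notMem_range_mul_right hβ) _
  have hβS : β ∈ Set.range (· * β) := ⟨1, one_mul β⟩
  have hβ : P (fockE β) = fockE β := lp.indicatorCLM_single_of_mem hβS _
  have hc0 : c = 0 := by
    simpa [hc, fockE_ne_zero] using h1
  simp [hc, hc0, eq_comm, fockE_ne_zero] at hβ

end IsWeightedShift

theorem stmt_10_general (n : ℕ) (μ : Word n → ℝ)
    (hμ : ∀ β : Word n, 1 ≤ FreeMonoid.length β → 0 ≤ μ β)
    (W : Fin n → Fock n →L[ℂ] Fock n) (hW : IsWeightedShift μ W) :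
    (∀ A : Fock n →L[ℂ] Fock n,
        (∀ i, A.comp (W i) = (W i).comp A ∧
          A.comp (adjoint (W i)) = (adjoint (W i)).comp A) →
        ∃ c : ℂ, A = c • (1 : Fock n →L[ℂ] Fock n)) ↔
      ∀ β : Word n, 1 ≤ FreeMonoid.length β → 0 < μ β := by
  change HasTrivialCommutant ℂ W ↔ _
  refine ⟨fun h β hβ => (hμ β hβ).lt_of_ne' fun hμβ => ?_, fun hpos => ?_⟩
  · have hβ1 : β ≠ 1 := by
      rintro rfl
      simp at hβ
    exact hW.not_hasTrivialCommutant_of_eq_zero hβ1 hμβ h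
  · exact hW.hasTrivialCommutant fun i α => (hpos _ (by simp [FreeMonoid.length_mul])).ne'

theorem stmt_10 (n : ℕ) (hn : 1 ≤ n) (μ : Word n → ℝ)
    (hμ : ∀ β : Word n, 1 ≤ FreeMonoid.length β → 0 ≤ μ β)
    (hbdd : BddWeights μ)
    (W : Fin n → Fock n →L[ℂ] Fock n) (hW : IsWeightedShift μ W) :
    (∀ A : Fock n →L[ℂ] Fock n,
        (∀ i, A.comp (W i) = (W i).comp A ∧
          A.comp (adjoint (W i)) = (adjoint (W i)).comp A) →
        ∃ c : ℂ, A = c • (1 : Fock n →L[ℂ] Fock n)) ↔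
      ∀ β : Word n, 1 ≤ FreeMonoid.length β → 0 < μ β :=
  stmt_10_general n μ hμ W hW

end
end
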